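/- With v_1, v_2, v_3 defined by the recursive Mex algorithm, for all n ≥ 1 and all 1 ≤ j < i ≤ 3, one has v_i(n+1) - v_j(n+1) - (v_i(n) - v_j(n)) ≥ i - j. -/

import Mathlib

/-- Minimum excluded value of a set of natural numbers. -/
noncomputable def mex (S : Set ℕ) : ℕ := sInf {m : ℕ | m ∉ S}

/-- Coordinates of a set of triples. -/
def coords (G : Set (ℕ × ℕ × ℕ)) : Set ℕ :=
  {k | ∃ x ∈ G, k = x.1 ∨ k = x.2.1 ∨ k = x.2.2}

/-- Pairwise coordinate differences of a set of triples. -/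
def diffs (G : Set (ℕ × ℕ × ℕ)) : Set ℕ :=
  {d | ∃ x ∈ G, d = x.2.1 - x.1 ∨ d = x.2.2 - x.2.1 ∨ d = x.2.2 - x.1}

/-- One step of the Mex algorithm: the next P-position. -/
noncomputable def step (G : Set (ℕ × ℕ × ℕ)) : ℕ × ℕ × ℕ :=
  let F := coords G
  let D := diffs G
  let a := mex F
  let b := mex ((fun d => a + d) '' D ∪ Set.Icc 1 a ∪ F)
  let c := mex ((fun d => b + d) '' D ∪ Set.Icc 1 b ∪ F)
  (a, b, c)

/-- The sets `G_n` of P-positions computed by the Mex algorithm. -/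
noncomputable def Gset : ℕ → Set (ℕ × ℕ × ℕ)
  | 0 => {(0, 0, 0)}
  | n + 1 => Gset n ∪ {step (Gset n)}

/-- The `n`-th P-position `(v_1(n), v_2(n), v_3(n))`. -/
noncomputable def v : ℕ → ℕ × ℕ × ℕ
  | 0 => (0, 0, 0)
  | n + 1 => step (Gset n)

noncomputable def v1 (n : ℕ) : ℕ := (v n).1
noncomputable def v2 (n : ℕ) : ℕ := (v n).2.1
noncomputable def v3 (n : ℕ) : ℕ := (v n).2.2

/-- `F_n`: the set of coordinates of elements of `G_n`. -/
noncomputable def Fset (n : ℕ) : Set ℕ := coords (Gset n)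

/-- `D_n`: the set of pairwise coordinate differences over `G_n`. -/
noncomputable def Dset (n : ℕ) : Set ℕ := diffs (Gset n)


/-! Write `aₙ = v₁(n+1) = mex Fₙ` and `mₙ = mex Dₙ`. Since `0` lies in `Fₙ` and in `Dₙ`, the Mex
rule gives `v₂(n+1) = aₙ + pₙ`, where `pₙ` (`gap n`) is the least `t` with `t ∉ Dₙ` and
`aₙ + t ∉ Fₙ`, and similarly for `v₃(n+1)`. By strong induction, `mₙ ≤ pₙ < mₙ₊₁` and
`v₃(n+1) = v₂(n+1) + mₙ`. In the inductive step, the invariant says that the elements of `Dₙ`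
above `mₙ` are values of `v₃ - v₁` and the elements of `Fₙ` from `aₙ + mₙ` on are values of `v₃`,
spaced at least `2` and `3` apart. So one of `mₙ, mₙ + 1, mₙ + 2` is free, no coordinate reaches
`aₙ + 2mₙ`, and `[0, pₙ] ⊆ Dₙ₊₁`. The three inequalities say that `pₙ`, `pₙ + mₙ` and `mₙ`
increase by at least `1`, `2` and `1`. -/

lemma mex_le_of_notMem {S : Set ℕ} {k : ℕ} (hk : k ∉ S) : mex S ≤ k := Nat.sInf_le hk

lemma mem_of_lt_mex {S : Set ℕ} {k : ℕ} (hk : k < mex S) : k ∈ S :=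
  not_not.mp fun h => (mex_le_of_notMem h).not_gt hk

lemma mex_notMem_of_notMem {S : Set ℕ} {k : ℕ} (hk : k ∉ S) : mex S ∉ S :=
  Nat.sInf_mem (s := {m | m ∉ S}) ⟨k, hk⟩

lemma Set.Finite.mex_notMem {S : Set ℕ} (hS : S.Finite) : mex S ∉ S :=
  mex_notMem_of_notMem hS.infinite_compl.nonempty.some_mem

lemma mex_eq_of_forall_lt_mem {S : Set ℕ} {k : ℕ} (hk : k ∉ S) (h : ∀ y < k, y ∈ S) :
    mex S = k :=
  (mex_le_of_notMem hk).antisymm <| not_lt.mp fun hlt => mex_notMem_of_notMem hk (h _ hlt)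

lemma le_mex_of_forall_lt_mem {S : Set ℕ} (hS : S.Finite) {k : ℕ} (h : ∀ y < k, y ∈ S) :
    k ≤ mex S :=
  not_lt.mp fun hlt => hS.mex_notMem (h _ hlt)

lemma mex_le_mex {S S' : Set ℕ} (hS' : S'.Finite) (h : S ⊆ S') : mex S ≤ mex S' :=
  le_mex_of_forall_lt_mem hS' fun _ hy => h (mem_of_lt_mex hy)

lemma mex_pos {S : Set ℕ} (hS : S.Finite) (h0 : 0 ∈ S) : 0 < mex S :=
  Nat.pos_of_ne_zero fun h => hS.mex_notMem (h ▸ h0)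

def blockedShifts (D F : Set ℕ) (a : ℕ) : Set ℕ := {t | t ∈ D ∨ a + t ∈ F}

lemma blockedShifts_finite {D F : Set ℕ} (hD : D.Finite) (hF : F.Finite) (a : ℕ) :
    (blockedShifts D F a).Finite :=
  (hD.union (hF.preimage (add_right_injective a).injOn)).subset fun _ ht => ht

lemma mex_image_add_union_Icc_union {D F : Set ℕ} (hD : D.Finite) (hF : F.Finite)
    (hD0 : 0 ∈ D) (hF0 : 0 ∈ F) (a : ℕ) :
    mex ((fun d => a + d) '' D ∪ Set.Icc 1 a ∪ F) = a + mex (blockedShifts D F a) := by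
  set t := mex (blockedShifts D F a)
  have ht : t ∉ blockedShifts D F a := (blockedShifts_finite hD hF a).mex_notMem
  apply mex_eq_of_forall_lt_mem
  · rintro ((⟨d, hd, hdt⟩ | ⟨h1, h2⟩) | h)
    · exact ht (Or.inl (add_left_cancel hdt ▸ hd))
    · exact ht (Or.inl (show t = 0 by omega ▸ hD0))
    · exact ht (Or.inr h)
  · intro y hy
    rcases Nat.eq_zero_or_pos y with rfl | hy0
    · exact Or.inr hF0
    rcases le_or_gt y a with hya | hya
    · exact Or.inl (Or.inr ⟨hy0, hya⟩)
    obtain ⟨s, rfl⟩ : ∃ s, y = a + s := ⟨y - a, by omega⟩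
    rcases mem_of_lt_mex (show s < t by omega) with hs | hs
    · exact Or.inl (Or.inl ⟨s, hs, rfl⟩)
    · exact Or.inr hs

lemma coords_mono : Monotone coords := fun _ _ h _ ⟨x, hx, hk⟩ => ⟨x, h hx, hk⟩

lemma diffs_mono : Monotone diffs := fun _ _ h _ ⟨x, hx, hd⟩ => ⟨x, h hx, hd⟩

lemma coords_finite {G : Set (ℕ × ℕ × ℕ)} (hG : G.Finite) : (coords G).Finite := by
  refine (((hG.image Prod.fst).union (hG.image fun x => x.2.1)).union
    (hG.image fun x => x.2.2)).subset ?_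
  rintro _ ⟨x, hx, rfl | rfl | rfl⟩
  exacts [Or.inl (Or.inl ⟨x, hx, rfl⟩), Or.inl (Or.inr ⟨x, hx, rfl⟩), Or.inr ⟨x, hx, rfl⟩]

lemma diffs_finite {G : Set (ℕ × ℕ × ℕ)} (hG : G.Finite) : (diffs G).Finite := by
  refine (((hG.image fun x => x.2.1 - x.1).union (hG.image fun x => x.2.2 - x.2.1)).union
    (hG.image fun x => x.2.2 - x.1)).subset ?_
  rintro _ ⟨x, hx, rfl | rfl | rfl⟩
  exacts [Or.inl (Or.inl ⟨x, hx, rfl⟩), Or.inl (Or.inr ⟨x, hx, rfl⟩), Or.inr ⟨x, hx, rfl⟩]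

lemma Gset_finite (n : ℕ) : (Gset n).Finite := by
  induction n with
  | zero => exact Set.finite_singleton _
  | succ n ih => exact ih.union (Set.finite_singleton _)

lemma Gset_mono : Monotone Gset := monotone_nat_of_le_succ fun _ => Set.subset_union_left

lemma Fset_finite (n : ℕ) : (Fset n).Finite := coords_finite (Gset_finite n)

lemma Dset_finite (n : ℕ) : (Dset n).Finite := diffs_finite (Gset_finite n)

lemma Fset_mono : Monotone Fset := coords_mono.comp Gset_mono

lemma Dset_mono : Monotone Dset := diffs_mono.comp Gset_mono

lemma mem_Gset_iff {n : ℕ} {x : ℕ × ℕ × ℕ} :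
    x ∈ Gset n ↔ x = (0, 0, 0) ∨ ∃ i < n, x = v (i + 1) := by
  induction n with
  | zero => simp [Gset]
  | succ n ih =>
    simp only [Gset, Set.mem_union, ih, Set.mem_singleton_iff, Nat.lt_succ_iff_lt_or_eq,
      or_and_right, exists_or, exists_eq_left, or_assoc]
    rfl

lemma mem_Fset_iff {n y : ℕ} :
    y ∈ Fset n ↔ y = 0 ∨ ∃ i < n, y = v1 (i + 1) ∨ y = v2 (i + 1) ∨ y = v3 (i + 1) := by
  simp [Fset, coords, mem_Gset_iff, or_and_right, exists_or, v1, v2, v3]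

lemma mem_Dset_iff {n d : ℕ} :
    d ∈ Dset n ↔ d = 0 ∨ ∃ i < n, d = v2 (i + 1) - v1 (i + 1) ∨ d = v3 (i + 1) - v2 (i + 1) ∨
      d = v3 (i + 1) - v1 (i + 1) := by
  simp [Dset, diffs, mem_Gset_iff, or_and_right, exists_or, v1, v2, v3]

lemma zero_mem_Fset (n : ℕ) : 0 ∈ Fset n := mem_Fset_iff.mpr (Or.inl rfl)

lemma zero_mem_Dset (n : ℕ) : 0 ∈ Dset n := mem_Dset_iff.mpr (Or.inl rfl)

lemma v1_lt_v1 {i j : ℕ} (h : i < j) : v1 (i + 1) < v1 (j + 1) := by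
  have hmem : v1 (i + 1) ∈ Fset j := mem_Fset_iff.mpr (Or.inr ⟨i, h, Or.inl rfl⟩)
  have hle : v1 (i + 1) ≤ v1 (j + 1) := mex_le_mex (Fset_finite j) (Fset_mono h.le)
  refine hle.lt_of_ne fun he => (Fset_finite j).mex_notMem ?_
  rwa [he] at hmem

noncomputable def gap (n : ℕ) : ℕ := mex (blockedShifts (Dset n) (Fset n) (v1 (n + 1)))

lemma v2_succ (n : ℕ) : v2 (n + 1) = v1 (n + 1) + gap n :=
  mex_image_add_union_Icc_union (Dset_finite n) (Fset_finite n) (zero_mem_Dset n)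
    (zero_mem_Fset n) _

lemma v3_succ (n : ℕ) :
    v3 (n + 1) = v2 (n + 1) + mex (blockedShifts (Dset n) (Fset n) (v2 (n + 1))) :=
  mex_image_add_union_Icc_union (Dset_finite n) (Fset_finite n) (zero_mem_Dset n)
    (zero_mem_Fset n) _

lemma mex_Dset_le_gap (n : ℕ) : mex (Dset n) ≤ gap n :=
  le_mex_of_forall_lt_mem (blockedShifts_finite (Dset_finite n) (Fset_finite n) _)
    fun _ hy => Or.inl (mem_of_lt_mex hy)

structure StepInvariant (n : ℕ) : Prop where
  mex_Dset_le : mex (Dset n) ≤ v2 (n + 1) - v1 (n + 1)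
  lt_mex_Dset_succ : v2 (n + 1) - v1 (n + 1) < mex (Dset (n + 1))
  v3_eq : v3 (n + 1) = v2 (n + 1) + mex (Dset n)

namespace StepInvariant

variable {i j : ℕ}

lemma v1_lt_v2 (h : StepInvariant i) : v1 (i + 1) < v2 (i + 1) := by
  have := mex_pos (Dset_finite i) (zero_mem_Dset i)
  have := h.mex_Dset_le
  omega

lemma mex_Dset_lt_succ (h : StepInvariant i) : mex (Dset i) < mex (Dset (i + 1)) := by
  have hmem : mex (Dset i) ∈ Dset (i + 1) :=
    mem_Dset_iff.mpr (Or.inr ⟨i, i.lt_succ_self, Or.inr (Or.inl (by rw [h.v3_eq]; omega))⟩)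
  have hle := mex_le_mex (Dset_finite (i + 1)) (Dset_mono i.le_succ)
  exact hle.lt_of_ne fun he => (Dset_finite (i + 1)).mex_notMem (he ▸ hmem)

lemma mex_Dset_lt (h : StepInvariant i) (hij : i < j) : mex (Dset i) < mex (Dset j) :=
  h.mex_Dset_lt_succ.trans_le (mex_le_mex (Dset_finite j) (Dset_mono hij))

lemma v2_sub_v1_lt_mex_Dset (h : StepInvariant i) (hij : i < j) :
    v2 (i + 1) - v1 (i + 1) < mex (Dset j) :=
  h.lt_mex_Dset_succ.trans_le (mex_le_mex (Dset_finite j) (Dset_mono hij))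

lemma v2_sub_v1_lt (hi : StepInvariant i) (hj : StepInvariant j) (hij : i < j) :
    v2 (i + 1) - v1 (i + 1) < v2 (j + 1) - v1 (j + 1) :=
  (hi.v2_sub_v1_lt_mex_Dset hij).trans_le hj.mex_Dset_le

lemma v3_sub_v1_add_two_le (hi : StepInvariant i) (hj : StepInvariant j) (hij : i < j) :
    v3 (i + 1) - v1 (i + 1) + 2 ≤ v3 (j + 1) - v1 (j + 1) := by
  have := hi.v1_lt_v2; have := hj.v1_lt_v2; have := hi.v3_eq; have := hj.v3_eq
  have := hi.v2_sub_v1_lt hj hij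
  have := hi.mex_Dset_lt hij
  omega

lemma v3_add_three_le (hi : StepInvariant i) (hj : StepInvariant j) (hij : i < j) :
    v3 (i + 1) + 3 ≤ v3 (j + 1) := by
  have := hi.v1_lt_v2; have := hj.v1_lt_v2; have := hi.v3_eq; have := hj.v3_eq
  have := hi.v3_sub_v1_add_two_le hj hij
  have := v1_lt_v1 hij
  omega

end StepInvariant

section Induction

variable {n : ℕ}

lemma exists_eq_v3_sub_v1_of_mem_Dset (hI : ∀ k < n, StepInvariant k) {d : ℕ}
    (hd : d ∈ Dset n) (hlt : mex (Dset n) < d) : ∃ k < n, d = v3 (k + 1) - v1 (k + 1) := by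
  rcases mem_Dset_iff.mp hd with rfl | ⟨k, hk, hd⟩
  · omega
  have := (hI k hk).v2_sub_v1_lt_mex_Dset hk
  have := (hI k hk).mex_Dset_lt hk
  have := (hI k hk).v3_eq
  exact ⟨k, hk, by omega⟩

lemma exists_eq_v3_of_mem_Fset (hI : ∀ k < n, StepInvariant k) {y : ℕ} (hy : y ∈ Fset n)
    (hle : v1 (n + 1) + mex (Dset n) ≤ y) : ∃ k < n, y = v3 (k + 1) := by
  rcases mem_Fset_iff.mp hy with rfl | ⟨k, hk, hy⟩
  · have := mex_pos (Dset_finite n) (zero_mem_Dset n)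
    omega
  have := (hI k hk).v1_lt_v2
  have := (hI k hk).v2_sub_v1_lt_mex_Dset hk
  have := v1_lt_v1 hk
  exact ⟨k, hk, by omega⟩

lemma lt_of_mem_Fset (hI : ∀ k < n, StepInvariant k) {y : ℕ} (hy : y ∈ Fset n) :
    y < v1 (n + 1) + 2 * mex (Dset n) := by
  by_contra! hle
  obtain ⟨k, hk, rfl⟩ := exists_eq_v3_of_mem_Fset hI hy (by omega)
  have := (hI k hk).v1_lt_v2
  have := (hI k hk).v3_eq
  have := (hI k hk).v2_sub_v1_lt_mex_Dset hk
  have := (hI k hk).mex_Dset_lt hk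
  have := v1_lt_v1 hk
  omega

lemma add_two_le_of_mem_Dset (hI : ∀ k < n, StepInvariant k) {d e : ℕ} (hd : d ∈ Dset n)
    (he : e ∈ Dset n) (hmd : mex (Dset n) < d) (hde : d < e) : d + 2 ≤ e := by
  obtain ⟨k, hk, rfl⟩ := exists_eq_v3_sub_v1_of_mem_Dset hI hd hmd
  obtain ⟨l, hl, rfl⟩ := exists_eq_v3_sub_v1_of_mem_Dset hI he (hmd.trans hde)
  rcases lt_trichotomy k l with hkl | rfl | hlk
  · exact (hI k hk).v3_sub_v1_add_two_le (hI l hl) hkl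
  · omega
  · have := (hI l hl).v3_sub_v1_add_two_le (hI k hk) hlk
    omega

lemma add_three_le_of_mem_Fset (hI : ∀ k < n, StepInvariant k) {y z : ℕ} (hy : y ∈ Fset n)
    (hz : z ∈ Fset n) (hmy : v1 (n + 1) + mex (Dset n) ≤ y) (hyz : y < z) : y + 3 ≤ z := by
  obtain ⟨k, hk, rfl⟩ := exists_eq_v3_of_mem_Fset hI hy hmy
  obtain ⟨l, hl, rfl⟩ := exists_eq_v3_of_mem_Fset hI hz (hmy.trans hyz.le)
  rcases lt_trichotomy k l with hkl | rfl | hlk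
  · exact (hI k hk).v3_add_three_le (hI l hl) hkl
  · omega
  · have := (hI l hl).v3_add_three_le (hI k hk) hlk
    omega

lemma gap_le_mex_Dset_add_two (hI : ∀ k < n, StepInvariant k) : gap n ≤ mex (Dset n) + 2 := by
  set m := mex (Dset n)
  by_contra! h
  have hblocked : ∀ t ≤ m + 2, t ∈ blockedShifts (Dset n) (Fset n) (v1 (n + 1)) :=
    fun t ht => mem_of_lt_mex (by unfold gap at h; omega)
  have hmF : v1 (n + 1) + m ∈ Fset n :=
    (hblocked m (by omega)).resolve_left (Dset_finite n).mex_notMem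
  have hD : ∀ t, m < t → t ≤ m + 2 → t ∈ Dset n := fun t h1 h2 =>
    (hblocked t h2).resolve_right fun hF => by
      have := add_three_le_of_mem_Fset hI hmF hF le_rfl (by omega)
      omega
  have := add_two_le_of_mem_Dset hI (hD (m + 1) (by omega) (by omega))
    (hD (m + 2) (by omega) le_rfl) (by omega) (by omega)
  omega

lemma mem_Dset_of_mex_Dset_lt_of_lt_gap (hI : ∀ k < n, StepInvariant k) {t : ℕ}
    (hmt : mex (Dset n) < t) (htp : t < gap n) : t ∈ Dset n := by
  have hmF : v1 (n + 1) + mex (Dset n) ∈ Fset n :=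
    (mem_of_lt_mex (hmt.trans htp)).resolve_left (Dset_finite n).mex_notMem
  refine (mem_of_lt_mex htp).resolve_right fun htF => ?_
  have := add_three_le_of_mem_Fset hI hmF htF le_rfl (by omega)
  have := gap_le_mex_Dset_add_two hI
  omega

lemma v3_succ_eq (hI : ∀ k < n, StepInvariant k) : v3 (n + 1) = v2 (n + 1) + mex (Dset n) := by
  rw [v3_succ, mex_eq_of_forall_lt_mem]
  · rintro (hD | hF)
    · exact (Dset_finite n).mex_notMem hD
    · have := lt_of_mem_Fset hI hF
      have := v2_succ n
      have := mex_Dset_le_gap n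
      omega
  · exact fun _ hy => Or.inl (mem_of_lt_mex hy)

lemma gap_lt_mex_Dset_succ (hI : ∀ k < n, StepInvariant k) : gap n < mex (Dset (n + 1)) := by
  have hnew : ∀ t, t = gap n ∨ t = mex (Dset n) → t ∈ Dset (n + 1) := by
    rintro t (rfl | rfl)
    · exact mem_Dset_iff.mpr (Or.inr ⟨n, n.lt_succ_self, Or.inl (by rw [v2_succ]; omega)⟩)
    · exact mem_Dset_iff.mpr
        (Or.inr ⟨n, n.lt_succ_self, Or.inr (Or.inl (by rw [v3_succ_eq hI]; omega))⟩)
  refine le_mex_of_forall_lt_mem (Dset_finite _) fun t ht => ?_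
  rcases lt_trichotomy t (mex (Dset n)) with htm | rfl | hmt
  · exact Dset_mono n.le_succ (mem_of_lt_mex htm)
  · exact hnew _ (Or.inr rfl)
  rcases (Nat.lt_succ_iff.mp ht).lt_or_eq with htp | rfl
  · exact Dset_mono n.le_succ (mem_Dset_of_mex_Dset_lt_of_lt_gap hI hmt htp)
  · exact hnew _ (Or.inl rfl)

lemma stepInvariant_of_forall_lt (hI : ∀ k < n, StepInvariant k) : StepInvariant n := by
  have hgap : v2 (n + 1) - v1 (n + 1) = gap n := by rw [v2_succ]; omega
  exact ⟨hgap ▸ mex_Dset_le_gap n, hgap ▸ gap_lt_mex_Dset_succ hI, v3_succ_eq hI⟩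

end Induction

theorem stepInvariant (n : ℕ) : StepInvariant n :=
  Nat.strong_induction_on n fun _ => stepInvariant_of_forall_lt

theorem stmt8 : ∀ n : ℕ, 1 ≤ n →
    ((v2 (n + 1) : ℤ) - v1 (n + 1)) - ((v2 n : ℤ) - v1 n) ≥ 1 ∧
    ((v3 (n + 1) : ℤ) - v1 (n + 1)) - ((v3 n : ℤ) - v1 n) ≥ 2 ∧
    ((v3 (n + 1) : ℤ) - v2 (n + 1)) - ((v3 n : ℤ) - v2 n) ≥ 1 := by
  intro n hn
  obtain ⟨k, rfl⟩ : ∃ k, n = k + 1 := ⟨n - 1, by omega⟩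
  have hk := stepInvariant k
  have hk1 := stepInvariant (k + 1)
  have := hk.v1_lt_v2
  have := hk1.v1_lt_v2
  have := hk.v2_sub_v1_lt hk1 k.lt_succ_self
  have := hk.v3_sub_v1_add_two_le hk1 k.lt_succ_self
  have := hk.v3_eq
  have := hk1.v3_eq
  have := hk.mex_Dset_lt_succ
  omega
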